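/- arXiv:2503.05657 — 4 statements merged into one kernel-verified Lean document; each statement's English description precedes it below -/
import Mathlib

section
/- Let E be a real inner product space, let L : E → ℝ be continuously differentiable with gradient ∇L, and let θ : [0,∞) → E solve the gradient flow θ'(t) = −∇L(θ(t)) for all t ≥ 0. If δ : E → ℝ is Lipschitz with constant K, then for every t ≥ 0 one has (δ(θ(t)) − δ(θ(0)))² ≤ t · K² · (L(θ(0)) − L(θ(t))). Equivalently, whenever K > 0 and L(θ(0)) > L(θ(t)), the time t satisfies t ≥ (δ(θ(t)) − δ(θ(0)))² / (K² · |L(θ(0)) − L(θ(t))|). -/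
/-!
Along a gradient flow the loss decreases at rate `‖∇L(θ s)‖² = ‖θ'(s)‖²`, so
`L(θ 0) - L(θ t) = ∫₀ᵗ ‖θ'‖²`. By Cauchy–Schwarz the displacement satisfies
`‖θ t - θ 0‖² ≤ (∫₀ᵗ ‖θ'‖)² ≤ t ∫₀ᵗ ‖θ'‖²`, hence `‖θ t - θ 0‖² ≤ t (L(θ 0) - L(θ t))`,
and a `K`-Lipschitz `δ` moves by at most `K ‖θ t - θ 0‖`.
-/

open intervalIntegral Set

theorem sq_intervalIntegral_le_mul_intervalIntegral_sq {f : ℝ → ℝ} {a b : ℝ} (hab : a ≤ b)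
    (hf : ContinuousOn f (Icc a b)) :
    (∫ x in a..b, f x) ^ 2 ≤ (b - a) * ∫ x in a..b, f x ^ 2 := by
  rcases hab.eq_or_lt with rfl | hab
  · simp
  set c := (∫ x in a..b, f x) / (b - a) with hc
  have hf₁ : IntervalIntegrable f MeasureTheory.volume a b := hf.intervalIntegrable_of_Icc hab.le
  have hf₂ : IntervalIntegrable (fun x => f x ^ 2) MeasureTheory.volume a b :=
    (hf.pow 2).intervalIntegrable_of_Icc hab.le
  -- `c` is the mean of `f`, and the variance `∫ (f - c)²` is nonnegative.
  have hvar : 0 ≤ ∫ x in a..b, (f x - c) ^ 2 := integral_nonneg hab.le fun _ _ => sq_nonneg _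
  have hexpand : ∫ x in a..b, (f x - c) ^ 2
      = (∫ x in a..b, f x ^ 2) - 2 * c * (∫ x in a..b, f x) + c ^ 2 * (b - a) := by
    have hsq : (fun x => (f x - c) ^ 2) = fun x => f x ^ 2 - 2 * c * f x + c ^ 2 := by
      ext x; ring
    rw [hsq, integral_add (hf₂.sub (hf₁.const_mul _)) intervalIntegrable_const,
      integral_sub hf₂ (hf₁.const_mul _), integral_const_mul, integral_const, smul_eq_mul]
    ring
  have hmean : ∫ x in a..b, f x = c * (b - a) := by
    rw [hc, div_mul_cancel₀ _ (sub_pos.2 hab).ne']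
  rw [hexpand, hmean] at hvar
  rw [hmean]
  nlinarith [sub_pos.2 hab]

theorem sq_norm_sub_le_mul_intervalIntegral_sq_norm_deriv {E : Type*} [NormedAddCommGroup E]
    [NormedSpace ℝ E] [CompleteSpace E] {γ γ' : ℝ → E} {a b : ℝ} (hab : a ≤ b)
    (hγ : ∀ s ∈ Icc a b, HasDerivAt γ (γ' s) s) (hγ' : ContinuousOn γ' (Icc a b)) :
    ‖γ b - γ a‖ ^ 2 ≤ (b - a) * ∫ s in a..b, ‖γ' s‖ ^ 2 := by
  have hlength : ‖γ b - γ a‖ ≤ ∫ s in a..b, ‖γ' s‖ := by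
    rw [← integral_eq_sub_of_hasDerivAt (by rwa [uIcc_of_le hab])
      (hγ'.intervalIntegrable_of_Icc hab)]
    exact norm_integral_le_integral_norm hab
  calc ‖γ b - γ a‖ ^ 2 ≤ (∫ s in a..b, ‖γ' s‖) ^ 2 := by gcongr
    _ ≤ (b - a) * ∫ s in a..b, ‖γ' s‖ ^ 2 :=
      sq_intervalIntegral_le_mul_intervalIntegral_sq hab hγ'.norm

section GradientFlow

variable {E : Type*} [NormedAddCommGroup E] [InnerProductSpace ℝ E] [CompleteSpace E]
  {L : E → ℝ} {θ : ℝ → E}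

theorem ContDiff.continuous_gradient {n : WithTop ℕ∞} (hL : ContDiff ℝ n L) (hn : n ≠ 0) :
    Continuous (gradient L) :=
  (InnerProductSpace.toDual ℝ E).symm.continuous.comp (hL.continuous_fderiv hn)

theorem hasDerivAt_comp_of_hasDerivAt_neg_gradient {s : ℝ} (hL : DifferentiableAt ℝ L (θ s))
    (hθ : HasDerivAt θ (-gradient L (θ s)) s) :
    HasDerivAt (fun u => L (θ u)) (-‖gradient L (θ s)‖ ^ 2) s := by
  refine (hL.hasGradientAt.hasFDerivAt.comp_hasDerivAt s hθ).congr_deriv ?_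
  rw [InnerProductSpace.toDual_apply_apply, inner_neg_right, real_inner_self_eq_norm_sq]

theorem continuousOn_gradient_of_gradientFlow (hL : ContDiff ℝ 1 L)
    (hθ : ∀ t, 0 ≤ t → HasDerivAt θ (-gradient L (θ t)) t) (t : ℝ) :
    ContinuousOn (fun s => gradient L (θ s)) (Icc 0 t) :=
  (hL.continuous_gradient one_ne_zero).comp_continuousOn
    fun s hs => (hθ s hs.1).continuousAt.continuousWithinAt

theorem sub_eq_intervalIntegral_sq_norm_gradient_of_gradientFlow (hL : ContDiff ℝ 1 L)
    (hθ : ∀ t, 0 ≤ t → HasDerivAt θ (-gradient L (θ t)) t) {t : ℝ} (ht : 0 ≤ t) :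
    L (θ 0) - L (θ t) = ∫ s in (0 : ℝ)..t, ‖gradient L (θ s)‖ ^ 2 := by
  have hgrad : ContinuousOn (fun s => ‖gradient L (θ s)‖ ^ 2) (Icc 0 t) :=
    (continuousOn_gradient_of_gradientFlow hL hθ t).norm.pow 2
  rw [← neg_sub, neg_eq_iff_eq_neg, ← integral_neg (f := fun s => ‖gradient L (θ s)‖ ^ 2)]
  refine (integral_eq_sub_of_hasDerivAt (f := fun u => L (θ u)) ?_ ?_).symm
  · intro s hs
    rw [uIcc_of_le ht] at hs
    exact hasDerivAt_comp_of_hasDerivAt_neg_gradient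
      ((hL.differentiable one_ne_zero) (θ s)) (hθ s hs.1)
  · exact hgrad.neg.intervalIntegrable_of_Icc ht

theorem sq_norm_sub_le_mul_sub_of_gradientFlow (hL : ContDiff ℝ 1 L)
    (hθ : ∀ t, 0 ≤ t → HasDerivAt θ (-gradient L (θ t)) t) {t : ℝ} (ht : 0 ≤ t) :
    ‖θ t - θ 0‖ ^ 2 ≤ t * (L (θ 0) - L (θ t)) := by
  have hvel : ContinuousOn (fun s => -gradient L (θ s)) (Icc 0 t) :=
    (continuousOn_gradient_of_gradientFlow hL hθ t).neg
  simpa only [norm_neg, sub_zero,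
    ← sub_eq_intervalIntegral_sq_norm_gradient_of_gradientFlow hL hθ ht]
    using sq_norm_sub_le_mul_intervalIntegral_sq_norm_deriv ht (fun s hs => hθ s hs.1) hvel

end GradientFlow

theorem unlearning_time_lower_bound_general
    {E : Type*} [NormedAddCommGroup E] [InnerProductSpace ℝ E] [CompleteSpace E]
    (L : E → ℝ) (hL : ContDiff ℝ 1 L)
    (θ : ℝ → E) (hθ : ∀ t, 0 ≤ t → HasDerivAt θ (-(gradient L (θ t))) t)
    (δ : E → ℝ) (K : ℝ)
    (hδ : ∀ x y, |δ x - δ y| ≤ K * ‖x - y‖) :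
    ∀ t, 0 ≤ t →
      (δ (θ t) - δ (θ 0)) ^ 2 ≤ t * K ^ 2 * (L (θ 0) - L (θ t)) ∧
        (0 < K → L (θ t) < L (θ 0) →
          (δ (θ t) - δ (θ 0)) ^ 2 / (K ^ 2 * |L (θ 0) - L (θ t)|) ≤ t) := by
  intro t ht
  have hmain : (δ (θ t) - δ (θ 0)) ^ 2 ≤ t * K ^ 2 * (L (θ 0) - L (θ t)) :=
    calc (δ (θ t) - δ (θ 0)) ^ 2 = |δ (θ t) - δ (θ 0)| ^ 2 := (sq_abs _).symm
      _ ≤ (K * ‖θ t - θ 0‖) ^ 2 := pow_le_pow_left₀ (abs_nonneg _) (hδ _ _) 2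
      _ = K ^ 2 * ‖θ t - θ 0‖ ^ 2 := mul_pow _ _ _
      _ ≤ K ^ 2 * (t * (L (θ 0) - L (θ t))) :=
        mul_le_mul_of_nonneg_left (sq_norm_sub_le_mul_sub_of_gradientFlow hL hθ ht) (sq_nonneg K)
      _ = t * K ^ 2 * (L (θ 0) - L (θ t)) := by ring
  refine ⟨hmain, fun hK hdecrease => ?_⟩
  rw [abs_of_pos (sub_pos.2 hdecrease), div_le_iff₀ (by positivity)]
  linarith

/-- Deterministic (Σ ≡ 0) unlearning-time lower bound: along a gradient flow of `L`,
a `K`-Lipschitz functional `δ` satisfies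
`(δ(θ t) − δ(θ 0))² ≤ t · K² · (L(θ 0) − L(θ t))`, equivalently a lower bound for `t`. -/
theorem unlearning_time_lower_bound
    {E : Type*} [NormedAddCommGroup E] [InnerProductSpace ℝ E] [CompleteSpace E]
    (L : E → ℝ) (hL : ContDiff ℝ 1 L)
    (θ : ℝ → E) (hθ : ∀ t, 0 ≤ t → HasDerivAt θ (-(gradient L (θ t))) t)
    (δ : E → ℝ) (K : ℝ) (hK : 0 ≤ K)
    (hδ : ∀ x y, |δ x - δ y| ≤ K * ‖x - y‖) :
    ∀ t, 0 ≤ t →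
      (δ (θ t) - δ (θ 0)) ^ 2 ≤ t * K ^ 2 * (L (θ 0) - L (θ t)) ∧
        (0 < K → L (θ t) < L (θ 0) →
          (δ (θ t) - δ (θ 0)) ^ 2 / (K ^ 2 * |L (θ 0) - L (θ t)|) ≤ t) :=
  unlearning_time_lower_bound_general L hL θ hθ δ K hδ
end

section
/- Let (Ω, P) be a probability space and let Y, Y' : Ω → ℝⁿ be random vectors such that ‖σ(Y)‖², ‖σ(−Y)‖² and ‖σ(Y')‖² are integrable, where σ(x) = max(x,0) is applied componentwise. If 𝔼|‖σ(Y)‖² − ‖σ(−Y)‖²| ≤ ε and 𝔼|‖σ(Y)‖² − ‖σ(Y')‖²| ≤ ε for some ε ≥ 0, then 𝔼‖σ(Y) − σ(−Y)‖² ≥ 𝔼‖σ(Y) − σ(Y')‖² − 2ε. -/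
open MeasureTheory

/-- Componentwise ReLU on `ℝⁿ` (Euclidean space). -/
noncomputable def reluVec {n : ℕ} (y : EuclideanSpace ℝ (Fin n)) : EuclideanSpace ℝ (Fin n) :=
  WithLp.toLp 2 (fun i => max (y i) 0)

/-!
Post-activations are nonnegative, so `⟪σ(y), σ(y')⟫ ≥ 0` and `‖σ(y) - σ(y')‖² ≤ ‖σ(y)‖² + ‖σ(y')‖²`,
while `σ(y)` and `σ(-y)` have disjoint supports, so that bound is an equality for `y' = -y`.
Integrating, `𝔼‖σ(Y) - σ(-Y)‖² = 𝔼‖σ(Y)‖² + 𝔼‖σ(-Y)‖²`, and the two `ε`-hypotheses say that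
`𝔼‖σ(-Y)‖²` and `𝔼‖σ(Y')‖²` are both within `ε` of `𝔼‖σ(Y)‖²`.
-/

lemma max_zero_mul_max_neg_zero (x : ℝ) : max x 0 * max (-x) 0 = 0 := by
  rcases le_total x 0 with hx | hx
  · simp [max_eq_right hx]
  · simp [max_eq_right (neg_nonpos.mpr hx)]

lemma norm_sub_sq_le_of_real_inner_nonneg {F : Type*} [NormedAddCommGroup F]
    [InnerProductSpace ℝ F] {x y : F} (h : 0 ≤ inner ℝ x y) : ‖x - y‖ ^ 2 ≤ ‖x‖ ^ 2 + ‖y‖ ^ 2 := by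
  rw [norm_sub_sq_real]
  linarith

namespace reluVec

variable {n : ℕ}

lemma inner_eq_sum (y y' : EuclideanSpace ℝ (Fin n)) :
    inner ℝ (reluVec y) (reluVec y') = ∑ i, max (y i) 0 * max (y' i) 0 := by
  simp only [reluVec, PiLp.inner_apply, RCLike.inner_apply, conj_trivial, mul_comm]

lemma inner_nonneg (y y' : EuclideanSpace ℝ (Fin n)) : 0 ≤ inner ℝ (reluVec y) (reluVec y') := by
  rw [inner_eq_sum]
  exact Finset.sum_nonneg fun i _ => by positivity

lemma inner_neg_eq_zero (y : EuclideanSpace ℝ (Fin n)) :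
    inner ℝ (reluVec y) (reluVec (-y)) = 0 := by
  rw [inner_eq_sum]
  exact Finset.sum_eq_zero fun i _ => by simpa using max_zero_mul_max_neg_zero (y i)

lemma norm_sub_sq_le (y y' : EuclideanSpace ℝ (Fin n)) :
    ‖reluVec y - reluVec y'‖ ^ 2 ≤ ‖reluVec y‖ ^ 2 + ‖reluVec y'‖ ^ 2 :=
  norm_sub_sq_le_of_real_inner_nonneg (inner_nonneg y y')

lemma norm_sub_neg_sq (y : EuclideanSpace ℝ (Fin n)) :
    ‖reluVec y - reluVec (-y)‖ ^ 2 = ‖reluVec y‖ ^ 2 + ‖reluVec (-y)‖ ^ 2 :=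
  by simpa only [sq] using norm_sub_sq_eq_norm_sq_add_norm_sq_real (inner_neg_eq_zero y)

end reluVec

lemma MeasureTheory.integral_sub_integral_le_integral_abs_sub {α : Type*} [MeasurableSpace α]
    {μ : Measure α} {f g : α → ℝ} (hf : Integrable f μ) (hg : Integrable g μ) :
    ∫ x, f x ∂μ - ∫ x, g x ∂μ ≤ ∫ x, |f x - g x| ∂μ := by
  rw [← integral_sub hf hg]
  exact integral_mono (hf.sub hg) (hf.sub hg).abs fun x => le_abs_self _

theorem negation_maximizes_activation_change_general
    {Ω : Type*} [MeasurableSpace Ω] (P : Measure Ω)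
    {n : ℕ} (Y Y' : Ω → EuclideanSpace ℝ (Fin n))
    (ε : ℝ)
    (hint1 : Integrable (fun ω => ‖reluVec (Y ω)‖ ^ 2) P)
    (hint2 : Integrable (fun ω => ‖reluVec (-(Y ω))‖ ^ 2) P)
    (hint3 : Integrable (fun ω => ‖reluVec (Y' ω)‖ ^ 2) P)
    (h1 : ∫ ω, |‖reluVec (Y ω)‖ ^ 2 - ‖reluVec (-(Y ω))‖ ^ 2| ∂P ≤ ε)
    (h2 : ∫ ω, |‖reluVec (Y ω)‖ ^ 2 - ‖reluVec (Y' ω)‖ ^ 2| ∂P ≤ ε) :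
    ∫ ω, ‖reluVec (Y ω) - reluVec (-(Y ω))‖ ^ 2 ∂P
      ≥ (∫ ω, ‖reluVec (Y ω) - reluVec (Y' ω)‖ ^ 2 ∂P) - 2 * ε := by
  have negation_eq : ∫ ω, ‖reluVec (Y ω) - reluVec (-(Y ω))‖ ^ 2 ∂P
      = ∫ ω, ‖reluVec (Y ω)‖ ^ 2 ∂P + ∫ ω, ‖reluVec (-(Y ω))‖ ^ 2 ∂P := by
    rw [← integral_add hint1 hint2]
    exact integral_congr_ae (.of_forall fun ω => reluVec.norm_sub_neg_sq (Y ω))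
  have change_le : ∫ ω, ‖reluVec (Y ω) - reluVec (Y' ω)‖ ^ 2 ∂P
      ≤ ∫ ω, ‖reluVec (Y ω)‖ ^ 2 ∂P + ∫ ω, ‖reluVec (Y' ω)‖ ^ 2 ∂P := by
    rw [← integral_add hint1 hint3]
    exact integral_mono_of_nonneg (.of_forall fun ω => by positivity) (hint1.add hint3)
      (.of_forall fun ω => reluVec.norm_sub_sq_le (Y ω) (Y' ω))
  have close_neg := integral_sub_integral_le_integral_abs_sub hint1 hint2
  have close_Y' := integral_sub_integral_le_integral_abs_sub hint3 hint1
  simp only [abs_sub_comm (‖reluVec (Y' _)‖ ^ 2)] at close_Y'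
  linarith

/-- Theorem 2 of the paper: weight negation maximizes the expected change of post-ReLU
activations up to error `2ε`. -/
theorem negation_maximizes_activation_change
    {Ω : Type*} [MeasurableSpace Ω] (P : Measure Ω) [IsProbabilityMeasure P]
    {n : ℕ} (Y Y' : Ω → EuclideanSpace ℝ (Fin n))
    (hY : Measurable Y) (hY' : Measurable Y')
    (ε : ℝ) (hε : 0 ≤ ε)
    (hint1 : Integrable (fun ω => ‖reluVec (Y ω)‖ ^ 2) P)
    (hint2 : Integrable (fun ω => ‖reluVec (-(Y ω))‖ ^ 2) P)
    (hint3 : Integrable (fun ω => ‖reluVec (Y' ω)‖ ^ 2) P)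
    (h1 : ∫ ω, |‖reluVec (Y ω)‖ ^ 2 - ‖reluVec (-(Y ω))‖ ^ 2| ∂P ≤ ε)
    (h2 : ∫ ω, |‖reluVec (Y ω)‖ ^ 2 - ‖reluVec (Y' ω)‖ ^ 2| ∂P ≤ ε) :
    ∫ ω, ‖reluVec (Y ω) - reluVec (-(Y ω))‖ ^ 2 ∂P
      ≥ (∫ ω, ‖reluVec (Y ω) - reluVec (Y' ω)‖ ^ 2 ∂P) - 2 * ε :=
  negation_maximizes_activation_change_general P Y Y' ε hint1 hint2 hint3 h1 h2
end

section
/- Let Y₁, Y₂ be independent random vectors in ℝⁿ whose 2n coordinates are i.i.d. standard Gaussian random variables, and let σ(x) = max(x,0) be applied componentwise. Then 𝔼‖σ(Y₁) − σ(Y₂)‖² = n·(1 − 1/π). -/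
/-!
Coordinatewise, `‖σ(Y₁) - σ(Y₂)‖²` is a sum of `n` terms `(σ(Z) - σ(Z'))²` with `Z, Z'`
independent standard Gaussians, and for independent identically distributed `Z, Z'` one has
`𝔼 (f(Z) - f(Z'))² = 2 Var f(Z)`. For the ReLU, `𝔼 σ(Z)² = 1/2` by the symmetry
`σ(z)² + σ(-z)² = z²`, while `𝔼 σ(Z) = ∫₀^∞ z φ(z) dz = 1/√(2π)`; hence each term has
expectation `2 (1/2 - 1/(2π)) = 1 - 1/π`.
-/

open MeasureTheory ProbabilityTheory

open Real Set
open scoped NNReal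

lemma integral_Ioi_mul_exp_neg_mul_sq {b : ℝ} (hb : 0 < b) :
    ∫ x in Ioi (0 : ℝ), x * exp (-b * x ^ 2) = (2 * b)⁻¹ := by
  have h := integral_rpow_mul_exp_neg_mul_rpow (p := 2) (q := 1) two_pos (by norm_num) hb
  norm_num [rpow_neg_one] at h
  simpa [mul_comm] using h

lemma memLp_max_zero_gaussianReal (p : ℝ≥0) (m : ℝ) (v : ℝ≥0) :
    MemLp (fun x => max x 0) p (gaussianReal m v) :=
  (memLp_id_gaussianReal p).pos_part

lemma integral_max_zero_gaussianReal :
    ∫ x, max x 0 ∂gaussianReal 0 1 = (√(2 * π))⁻¹ := by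
  have hpos : ∀ x ∈ Ioi (0 : ℝ),
      gaussianPDFReal 0 1 x • max x 0 = (√(2 * π))⁻¹ * (x * exp (-2⁻¹ * x ^ 2)) := by
    intro x hx
    rw [gaussianPDFReal, max_eq_left (le_of_lt hx)]
    simp only [NNReal.coe_one, mul_one, sub_zero, smul_eq_mul]
    ring_nf
  have hnonpos : ∀ x ∉ Ioi (0 : ℝ), gaussianPDFReal 0 1 x • max x 0 = 0 := fun x hx => by
    rw [max_eq_right (not_lt.1 hx), smul_zero]
  rw [integral_gaussianReal_eq_integral_smul one_ne_zero,
    ← setIntegral_eq_integral_of_forall_compl_eq_zero hnonpos,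
    setIntegral_congr_fun measurableSet_Ioi hpos, integral_const_mul,
    integral_Ioi_mul_exp_neg_mul_sq (by norm_num)]
  norm_num

lemma gaussianReal_map_neg_zero (v : ℝ≥0) :
    (gaussianReal 0 v).map (fun x => -x) = gaussianReal 0 v := by
  simpa using gaussianReal_map_neg (μ := 0) (v := v)

lemma integral_max_zero_sq_gaussianReal (v : ℝ≥0) :
    ∫ x, max x 0 ^ 2 ∂gaussianReal 0 v = v / 2 := by
  have hL2 : MemLp id 2 (gaussianReal 0 v) := memLp_id_gaussianReal 2
  have hsymm : ∫ x, max (-x) 0 ^ 2 ∂gaussianReal 0 v = ∫ x, max x 0 ^ 2 ∂gaussianReal 0 v := by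
    conv_rhs => rw [← gaussianReal_map_neg_zero]
    rw [integral_map (by fun_prop) (by fun_prop)]
  have hsecond : ∫ x, x ^ 2 ∂gaussianReal 0 v = v := by
    rw [← variance_of_integral_eq_zero aemeasurable_id' integral_id_gaussianReal,
      variance_fun_id_gaussianReal]
  have hsplit : ∀ x : ℝ, max x 0 ^ 2 + max (-x) 0 ^ 2 = x ^ 2 := fun x => by
    rcases le_total x 0 with h | h <;> simp [h]
  have hsum := integral_add hL2.pos_part.integrable_sq hL2.neg.pos_part.integrable_sq
  simp only [id, Pi.neg_apply, hsplit, hsecond, hsymm] at hsum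
  linarith

lemma variance_max_zero_gaussianReal :
    Var[fun x => max x 0; gaussianReal 0 1] = 1 / 2 - (2 * π)⁻¹ := by
  rw [variance_eq_sub (memLp_max_zero_gaussianReal 2 0 1)]
  simp only [Pi.pow_apply]
  rw [integral_max_zero_sq_gaussianReal, integral_max_zero_gaussianReal, inv_pow,
    sq_sqrt (by positivity)]
  norm_num

namespace ProbabilityTheory

variable {Ω 𝓧 : Type*} [MeasurableSpace Ω] [MeasurableSpace 𝓧] {P : Measure Ω}
  {μ : Measure 𝓧} {X Y : Ω → 𝓧} {f : 𝓧 → ℝ}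

lemma HasLaw.memLp_comp {p : ENNReal} (hX : HasLaw X μ P) (hf : MemLp f p μ) :
    MemLp (fun ω => f (X ω)) p P :=
  (hX.map_eq ▸ hf).comp_of_map hX.aemeasurable

lemma HasLaw.variance_comp (hX : HasLaw X μ P) (hf : AEMeasurable f μ) :
    Var[fun ω => f (X ω); P] = Var[f; μ] := by
  rw [← hX.map_eq, variance_map (hX.map_eq ▸ hf) hX.aemeasurable]
  rfl

lemma IndepFun.integral_comp_sub_comp_sq [IsFiniteMeasure P] (hXY : X ⟂ᵢ[P] Y)
    (hX : HasLaw X μ P) (hY : HasLaw Y μ P) (hf : MemLp f 2 μ) :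
    ∫ ω, (f (X ω) - f (Y ω)) ^ 2 ∂P = 2 * Var[f; μ] := by
  have hfX := hX.memLp_comp hf
  have hfY := hY.memLp_comp hf
  have hindep : (fun ω => f (X ω)) ⟂ᵢ[P] (fun ω => f (Y ω)) :=
    hXY.comp₀ hX.aemeasurable hY.aemeasurable (hX.map_eq ▸ hf.aemeasurable)
      (hY.map_eq ▸ hf.aemeasurable)
  have hmean : ∫ ω, (f (X ω) - f (Y ω)) ∂P = 0 := by
    rw [integral_sub (hfX.integrable one_le_two) (hfY.integrable one_le_two),
      ← Function.comp_def f X, ← Function.comp_def f Y,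
      hX.integral_comp hf.aestronglyMeasurable, hY.integral_comp hf.aestronglyMeasurable, sub_self]
  rw [← variance_of_integral_eq_zero (X := fun ω => f (X ω) - f (Y ω))
      (hfX.aemeasurable.sub hfY.aemeasurable) hmean, variance_fun_sub hfX hfY,
    hindep.covariance_eq_zero hfX hfY, hX.variance_comp hf.aemeasurable,
    hY.variance_comp hf.aemeasurable]
  ring

end ProbabilityTheory

lemma norm_reluVec_sub_sq {n : ℕ} (y z : EuclideanSpace ℝ (Fin n)) :
    ‖reluVec y - reluVec z‖ ^ 2 = ∑ i, (max (y i) 0 - max (z i) 0) ^ 2 := by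
  simp [EuclideanSpace.norm_sq_eq, reluVec]

theorem randomization_activation_distance_general
    {Ω : Type*} [MeasurableSpace Ω] (P : Measure Ω) [IsProbabilityMeasure P]
    {n : ℕ} (Y₁ Y₂ : Ω → EuclideanSpace ℝ (Fin n))
    (hindep : iIndepFun
      (Sum.elim (fun i ω => Y₁ ω i) (fun i ω => Y₂ ω i)) P)
    (hlaw : ∀ j : Fin n ⊕ Fin n,
      P.map (Sum.elim (fun i ω => Y₁ ω i) (fun i ω => Y₂ ω i) j) = gaussianReal 0 1) :
    ∫ ω, ‖reluVec (Y₁ ω) - reluVec (Y₂ ω)‖ ^ 2 ∂P = n * (1 - 1 / Real.pi) := by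
  have hZ : ∀ j, HasLaw (Sum.elim (fun i ω => Y₁ ω i) (fun i ω => Y₂ ω i) j)
      (gaussianReal 0 1) P :=
    -- `P.map` of a map that is not a.e.-measurable is `0`, which is not a Gaussian law
    fun j => ⟨.of_map_ne_zero (by simp [hlaw j, IsProbabilityMeasure.ne_zero]), hlaw j⟩
  have hrelu := memLp_max_zero_gaussianReal 2 0 1
  have hcoord : ∀ i, ∫ ω, (max (Y₁ ω i) 0 - max (Y₂ ω i) 0) ^ 2 ∂P = 1 - 1 / π := fun i => by
    have h := (hindep.indepFun (Sum.inl_ne_inr (a := i) (b := i))).integral_comp_sub_comp_sq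
      (hZ _) (hZ _) hrelu
    rw [variance_max_zero_gaussianReal] at h
    exact h.trans (by ring)
  have hint : ∀ i, Integrable (fun ω => (max (Y₁ ω i) 0 - max (Y₂ ω i) 0) ^ 2) P := fun i =>
    (((hZ (.inl i)).memLp_comp hrelu).sub ((hZ (.inr i)).memLp_comp hrelu)).integrable_sq
  simp_rw [norm_reluVec_sub_sq]
  rw [integral_finsetSum _ fun i _ => hint i]
  simp [hcoord]
  ring

/-- Weight-randomization lemma: if the `2n` coordinates of `Y₁, Y₂` are i.i.d. standard
Gaussians, then `𝔼‖σ(Y₁) − σ(Y₂)‖² = n·(1 − 1/π)`. -/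
theorem randomization_activation_distance
    {Ω : Type*} [MeasurableSpace Ω] (P : Measure Ω) [IsProbabilityMeasure P]
    {n : ℕ} (Y₁ Y₂ : Ω → EuclideanSpace ℝ (Fin n))
    (hmeas : ∀ j : Fin n ⊕ Fin n,
      Measurable (Sum.elim (fun i ω => Y₁ ω i) (fun i ω => Y₂ ω i) j))
    (hindep : iIndepFun
      (Sum.elim (fun i ω => Y₁ ω i) (fun i ω => Y₂ ω i)) P)
    (hlaw : ∀ j : Fin n ⊕ Fin n,
      P.map (Sum.elim (fun i ω => Y₁ ω i) (fun i ω => Y₂ ω i) j) = gaussianReal 0 1) :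
    ∫ ω, ‖reluVec (Y₁ ω) - reluVec (Y₂ ω)‖ ^ 2 ∂P = n * (1 - 1 / Real.pi) :=
  randomization_activation_distance_general P Y₁ Y₂ hindep hlaw
end

section
/- Let ψ : ℝ → ℝ and suppose there exist a, b, c ∈ ℝ with a·b ≠ 0 such that a·ψ(x) + b·ψ(−x) = c for all x ∈ ℝ. Let ℓ₁ : ℝᵐ → ℝⁿ and ℓ₂ : ℝⁿ → ℝᵖ be affine maps, and let Ψ : ℝⁿ → ℝⁿ denote componentwise application of ψ. Then there exists an affine map ℓ₂' : ℝⁿ → ℝᵖ such that ℓ₂ ∘ Ψ ∘ ℓ₁ = ℓ₂' ∘ Ψ ∘ (−ℓ₁), where −ℓ₁ is the affine map x ↦ −ℓ₁(x). -/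
/-! If `a ≠ 0`, the relation `a ψ(t) + b ψ(-t) = c` expresses `ψ(t)` as the affine function
`c / a - (b / a) ψ(-t)` of `ψ(-t)`. Applied coordinatewise this is an affine map of `ℝⁿ`, which the
next affine layer `ℓ₂` absorbs. -/

theorem exists_affineMap_pi_eq {𝕜 α ι : Type*} [Field 𝕜] {φ χ : α → 𝕜} {a b c : 𝕜} (ha : a ≠ 0)
    (h : ∀ t, a * φ t + b * χ t = c) :
    ∃ g : (ι → 𝕜) →ᵃ[𝕜] (ι → 𝕜), ∀ y : ι → α, (fun i => φ (y i)) = g (fun i => χ (y i)) := by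
  refine ⟨(-(b / a)) • AffineMap.id 𝕜 (ι → 𝕜) + AffineMap.const 𝕜 (ι → 𝕜) (fun _ => c / a),
    fun y => funext fun i => ?_⟩
  simp only [AffineMap.coe_add, AffineMap.coe_smul, AffineMap.coe_id, AffineMap.const_apply,
    Pi.add_apply, Pi.smul_apply, smul_eq_mul, id]
  field_simp
  linear_combination h (y i)

/-- Affine-compensation lemma (Lemma 10): if `ψ` satisfies `a·ψ(x) + b·ψ(−x) = c` with
`ab ≠ 0`, then for affine layers `ℓ₁, ℓ₂` there is an affine layer `ℓ₂'` with
`ℓ₂ ∘ Ψ ∘ ℓ₁ = ℓ₂' ∘ Ψ ∘ (−ℓ₁)`, where `Ψ` applies `ψ` componentwise. -/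
theorem affine_compensation_of_negation
    (ψ : ℝ → ℝ) (a b c : ℝ) (hab : a * b ≠ 0)
    (hψ : ∀ x : ℝ, a * ψ x + b * ψ (-x) = c)
    {m n p : ℕ}
    (ℓ₁ : (Fin m → ℝ) →ᵃ[ℝ] (Fin n → ℝ)) (ℓ₂ : (Fin n → ℝ) →ᵃ[ℝ] (Fin p → ℝ)) :
    ∃ ℓ₂' : (Fin n → ℝ) →ᵃ[ℝ] (Fin p → ℝ),
      ∀ x : Fin m → ℝ,
        ℓ₂ (fun i => ψ (ℓ₁ x i)) = ℓ₂' (fun i => ψ ((-ℓ₁) x i)) := by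
  obtain ⟨g, hg⟩ := exists_affineMap_pi_eq (ι := Fin n) (left_ne_zero_of_mul hab) hψ
  refine ⟨ℓ₂.comp g, fun x => ?_⟩
  rw [AffineMap.comp_apply, hg (ℓ₁ x)]
  rfl
end
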